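/- arXiv:1402.6250 — 2 statements merged into one kernel-verified Lean document; each statement's English description precedes it below -/
import Mathlib

section
/- For every almost periodic h : ℤ^d → ℂ^r, the Bohr spectrum Λ(h) = {ω ∈ 𝕋^d : [h, e_ω] ≠ 0} is a countable set. -/
open Filter

noncomputable section

/-- The multi-power `z^k = z₁^{k₁} ⋯ z_d^{k_d}` for `z ∈ ℂ^d`, `k ∈ ℤ^d`. -/
def zpowVec {d : ℕ} (z : Fin d → ℂ) (k : Fin d → ℤ) : ℂ := ∏ j, z j ^ (k j)

/-- Membership in the `d`-torus `𝕋^d`. -/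
def OnTorus {d : ℕ} (z : Fin d → ℂ) : Prop := ∀ j, ‖z j‖ = 1

/-- The box `{k ∈ ℤ^d : |k_j| ≤ N for all j}`. -/
def box (d : ℕ) (N : ℕ) : Finset (Fin d → ℤ) :=
  Fintype.piFinset fun _ => Finset.Icc (-(N : ℤ)) (N : ℤ)

/-- The average `(2N+1)^{-d} ∑_{|k_j| ≤ N} f(k)`. -/
def boxAvg {d : ℕ} (f : (Fin d → ℤ) → ℂ) (N : ℕ) : ℂ :=
  (((2 * N + 1 : ℕ) : ℂ) ^ d)⁻¹ * ∑ k ∈ box d N, f k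

/-- `f : ℤ^d → ℂ` has mean value `L`. -/
def HasMean {d : ℕ} (f : (Fin d → ℤ) → ℂ) (L : ℂ) : Prop :=
  Tendsto (boxAvg f) atTop (nhds L)

/-- The mean pairing `[h, g] = lim_N (2N+1)^{-d} ∑_{|k_j| ≤ N} h(k) ⬝ conj (g(k))`,
computed componentwise, has value `L`. -/
def HasMeanPairing {d : ℕ} {ι : Type} [Fintype ι]
    (h : (Fin d → ℤ) → ι → ℂ) (g : (Fin d → ℤ) → ℂ) (L : ι → ℂ) : Prop :=
  ∀ i, HasMean (fun k => h k i * (starRingEnd ℂ) (g k)) (L i)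

/-- The pure frequency sequence `e_ω(k) = ω^k`. -/
def eOmega {d : ℕ} (ω : Fin d → ℂ) : (Fin d → ℤ) → ℂ := fun k => zpowVec ω k

/-- Bohr almost periodicity for a bounded `h : ℤ^d → ℂ^ι`: for every `ε > 0`
there is `R > 0` such that every closed Euclidean ball of radius `R` in `ℝ^d`
contains an `ε`-translation vector `l` of `h`, i.e. `‖R_l h - h‖_∞ < ε`. -/
def IsBohrAP {d : ℕ} {ι : Type} [Fintype ι] (h : (Fin d → ℤ) → ι → ℂ) : Prop :=
  (∃ M : ℝ, ∀ k i, ‖h k i‖ ≤ M) ∧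
  ∀ ε > (0 : ℝ), ∃ R > (0 : ℝ), ∀ c : Fin d → ℝ, ∃ l : Fin d → ℤ,
    Real.sqrt (∑ j, ((l j : ℝ) - c j) ^ 2) ≤ R ∧
    ∀ k i, ‖h (fun j => k j - l j) i - h k i‖ < ε

/-!
Pair functions on `ℤ^d` through box averages, `⟨u, v⟩ = lim (2N+1)^{-d} ∑ u(k) conj (v(k))`.
The characters `e_ω`, `ω ∈ 𝕋^d`, are orthonormal for this mean: `e_ω conj e_ω' = e_μ` with
`μ = ω conj ω'`, whose box average factors into one-dimensional geometric averages, and these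
tend to `0` as soon as `μ_j ≠ 1`. Expanding the nonnegative average of `|f - ∑_{ω ∈ s} c_ω e_ω|²`
then gives Bessel's inequality `∑_{ω ∈ s} |[f, e_ω]|² ≤ sup |f|²` for every finite set `s` of
frequencies, so `ω ↦ |[f, e_ω]|²` is summable and has countable support. Applying this to each
component of `h` proves the theorem.
-/

open Finset hiding box
open ComplexConjugate Topology

section BoxAverage

variable {d : ℕ}

lemma card_box (d N : ℕ) : #(box d N) = (2 * N + 1) ^ d := by
  simp only [box, Fintype.card_piFinset, Int.card_Icc, prod_const, card_univ, Fintype.card_fin]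
  congr 1
  omega

lemma boxAvg_const (c : ℂ) (N : ℕ) : boxAvg (fun _ : Fin d → ℤ => c) N = c := by
  rw [boxAvg, sum_const, card_box, nsmul_eq_mul, ← mul_assoc, Nat.cast_pow,
    inv_mul_cancel₀ (pow_ne_zero _ (Nat.cast_ne_zero.2 (Nat.succ_ne_zero _))), one_mul]

lemma boxAvg_add (f g : (Fin d → ℤ) → ℂ) (N : ℕ) :
    boxAvg (fun k => f k + g k) N = boxAvg f N + boxAvg g N := by
  simp only [boxAvg, sum_add_distrib, mul_add]

lemma boxAvg_sub (f g : (Fin d → ℤ) → ℂ) (N : ℕ) :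
    boxAvg (fun k => f k - g k) N = boxAvg f N - boxAvg g N := by
  simp only [boxAvg, sum_sub_distrib, mul_sub]

lemma boxAvg_const_mul (c : ℂ) (f : (Fin d → ℤ) → ℂ) (N : ℕ) :
    boxAvg (fun k => c * f k) N = c * boxAvg f N := by
  simp only [boxAvg, ← mul_sum]
  ring

lemma boxAvg_sum {ι : Type*} (s : Finset ι) (f : ι → (Fin d → ℤ) → ℂ) (N : ℕ) :
    boxAvg (fun k => ∑ i ∈ s, f i k) N = ∑ i ∈ s, boxAvg (f i) N := by
  simp only [boxAvg, mul_sum]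
  exact sum_comm

lemma boxAvg_conj (f : (Fin d → ℤ) → ℂ) (N : ℕ) :
    boxAvg (fun k => conj (f k)) N = conj (boxAvg f N) := by
  simp only [boxAvg, map_mul, map_inv₀, map_pow, map_sum, map_natCast]

lemma re_boxAvg_le {f : (Fin d → ℤ) → ℂ} {C : ℝ} (hf : ∀ k, (f k).re ≤ C) (N : ℕ) :
    (boxAvg f N).re ≤ C := by
  have hcard : (0 : ℝ) < #(box d N) := by rw [card_box]; positivity
  have hbox : boxAvg f N = ((#(box d N) : ℝ)⁻¹ : ℝ) * ∑ k ∈ box d N, f k := by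
    rw [boxAvg, card_box]
    push_cast
    rfl
  rw [hbox, Complex.re_ofReal_mul, Complex.re_sum, inv_mul_le_iff₀ hcard]
  calc ∑ k ∈ box d N, (f k).re ≤ ∑ _k ∈ box d N, C := sum_le_sum fun k _ => hf k
    _ = #(box d N) * C := by rw [sum_const, nsmul_eq_mul]

end BoxAverage

section Mean

variable {d : ℕ} {f g : (Fin d → ℤ) → ℂ} {a b : ℂ}

lemma HasMean.add (hf : HasMean f a) (hg : HasMean g b) :
    HasMean (fun k => f k + g k) (a + b) :=
  (Tendsto.add hf hg).congr fun N => (boxAvg_add f g N).symm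

lemma HasMean.sub (hf : HasMean f a) (hg : HasMean g b) :
    HasMean (fun k => f k - g k) (a - b) :=
  (Tendsto.sub hf hg).congr fun N => (boxAvg_sub f g N).symm

lemma HasMean.const_mul (c : ℂ) (hf : HasMean f a) : HasMean (fun k => c * f k) (c * a) :=
  (Tendsto.const_mul c hf).congr fun N => (boxAvg_const_mul c f N).symm

lemma HasMean.conj (hf : HasMean f a) : HasMean (fun k => conj (f k)) (conj a) :=
  ((Complex.continuous_conj.tendsto a).comp hf).congr fun N => (boxAvg_conj f N).symm

lemma hasMean_sum {ι : Type*} {s : Finset ι} {f : ι → (Fin d → ℤ) → ℂ} {a : ι → ℂ}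
    (hf : ∀ i ∈ s, HasMean (f i) (a i)) : HasMean (fun k => ∑ i ∈ s, f i k) (∑ i ∈ s, a i) :=
  (tendsto_finsetSum s hf).congr fun N => (boxAvg_sum s f N).symm

lemma HasMean.re_le {C : ℝ} (hf : HasMean f a) (hC : ∀ k, (f k).re ≤ C) : a.re ≤ C :=
  le_of_tendsto' ((Complex.continuous_re.tendsto a).comp hf) (re_boxAvg_le hC)

end Mean

section Characters

def zpowAvg (z : ℂ) (N : ℕ) : ℂ :=
  ((2 * N + 1 : ℕ) : ℂ)⁻¹ * ∑ m ∈ Icc (-(N : ℤ)) N, z ^ m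

lemma sum_Icc_zpow_eq {K : Type*} [DivisionRing K] {z : K} (hz : z ≠ 0) (N : ℕ) :
    ∑ m ∈ Icc (-(N : ℤ)) N, z ^ m = z ^ (-(N : ℤ)) * ∑ i ∈ range (2 * N + 1), z ^ i := by
  rw [mul_sum]
  refine sum_nbij' (fun m => (m + N).toNat) (fun i => (i : ℤ) - N) ?_ ?_ ?_ ?_ ?_ <;>
    intro m hm <;> simp only [mem_Icc, mem_range] at hm ⊢
  · omega
  · omega
  · omega
  · omega
  · rw [← zpow_natCast, ← zpow_add₀ hz]
    congr 1
    omega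

lemma norm_zpowAvg_le_one {z : ℂ} (hz : ‖z‖ = 1) (N : ℕ) : ‖zpowAvg z N‖ ≤ 1 := by
  have hpos : (0 : ℝ) < (2 * N + 1 : ℕ) := by positivity
  rw [zpowAvg, norm_mul, norm_inv, Complex.norm_natCast, inv_mul_le_iff₀ hpos, mul_one]
  calc ‖∑ m ∈ Icc (-(N : ℤ)) N, z ^ m‖ ≤ ∑ m ∈ Icc (-(N : ℤ)) N, ‖z ^ m‖ := norm_sum_le _ _
    _ = (2 * N + 1 : ℕ) := by
      simp only [norm_zpow, hz, one_zpow, sum_const, Int.card_Icc, nsmul_eq_mul, mul_one]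
      congr 1
      omega

lemma tendsto_zpowAvg_zero {z : ℂ} (hz : ‖z‖ = 1) (hz1 : z ≠ 1) :
    Tendsto (zpowAvg z) atTop (𝓝 0) := by
  have hz0 : z ≠ 0 := by rintro rfl; simp at hz
  have hgap : 0 < ‖z - 1‖ := norm_pos_iff.2 (sub_ne_zero.2 hz1)
  -- `(z - 1) ∑_{i ≤ 2N} z^i = z^(2N+1) - 1` has norm at most `2`.
  have hgeom : ∀ N : ℕ, ‖∑ i ∈ range (2 * N + 1), z ^ i‖ ≤ 2 / ‖z - 1‖ := fun N => by
    rw [le_div_iff₀' hgap, ← norm_mul, mul_geom_sum]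
    calc ‖z ^ (2 * N + 1) - 1‖ ≤ ‖z ^ (2 * N + 1)‖ + ‖(1 : ℂ)‖ := norm_sub_le _ _
      _ = 2 := by rw [norm_pow, hz]; norm_num
  refine squeeze_zero_norm (a := fun N : ℕ => 2 / ‖z - 1‖ / (2 * N + 1 : ℕ)) (fun N => ?_) ?_
  · rw [zpowAvg, sum_Icc_zpow_eq hz0, norm_mul, norm_mul, norm_zpow, hz, one_zpow, one_mul,
      norm_inv, Complex.norm_natCast, inv_mul_eq_div]
    gcongr
    exact hgeom N
  · refine tendsto_const_nhds.div_atTop (tendsto_natCast_atTop_atTop.comp ?_)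
    exact tendsto_atTop_mono (fun N => show N ≤ 2 * N + 1 by omega) tendsto_id

variable {d : ℕ}

lemma norm_eOmega {ω : Fin d → ℂ} (hω : OnTorus ω) (k : Fin d → ℤ) : ‖eOmega ω k‖ = 1 := by
  simp [eOmega, zpowVec, norm_prod, norm_zpow, hω _]

lemma eOmega_mul_conj (ω ω' : Fin d → ℂ) (k : Fin d → ℤ) :
    eOmega ω k * conj (eOmega ω' k) = eOmega (fun j => ω j * conj (ω' j)) k := by
  simp only [eOmega, zpowVec, map_prod, map_zpow₀, ← prod_mul_distrib, mul_zpow]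

lemma boxAvg_eOmega (μ : Fin d → ℂ) (N : ℕ) : boxAvg (eOmega μ) N = ∏ j, zpowAvg (μ j) N := by
  simp only [boxAvg, box, eOmega, zpowVec, zpowAvg, prod_mul_distrib, prod_const, card_univ,
    Fintype.card_fin, prod_univ_sum, inv_pow]

lemma hasMean_eOmega_of_ne_one {μ : Fin d → ℂ} (hμ : OnTorus μ) (hμ1 : μ ≠ 1) :
    HasMean (eOmega μ) 0 := by
  obtain ⟨j₀, hj₀⟩ := Function.ne_iff.1 hμ1
  refine squeeze_zero_norm (fun N => ?_)
    (tendsto_zero_iff_norm_tendsto_zero.1 (tendsto_zpowAvg_zero (hμ j₀) hj₀))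
  rw [boxAvg_eOmega, norm_prod, ← mul_prod_erase _ _ (mem_univ j₀)]
  exact mul_le_of_le_one_right (norm_nonneg _)
    (prod_le_one (fun _ _ => norm_nonneg _) fun j _ => norm_zpowAvg_le_one (hμ j) N)

lemma hasMean_eOmega_mul_conj {ω ω' : Fin d → ℂ} (hω : OnTorus ω) (hω' : OnTorus ω') :
    HasMean (fun k => eOmega ω k * conj (eOmega ω' k)) (if ω = ω' then 1 else 0) := by
  split_ifs with h
  · subst h
    have hone : (fun k => eOmega ω k * conj (eOmega ω k)) = fun _ => 1 := funext fun k => by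
      rw [Complex.mul_conj, Complex.normSq_eq_norm_sq, norm_eOmega hω]
      norm_num
    rw [HasMean, hone]
    exact tendsto_const_nhds.congr fun N => (boxAvg_const 1 N).symm
  · simp only [eOmega_mul_conj]
    refine hasMean_eOmega_of_ne_one (fun j => ?_) fun h1 => h (funext fun j => ?_)
    · rw [norm_mul, Complex.norm_conj, hω j, hω' j, one_mul]
    · have hj := congr_fun h1 j
      rwa [Pi.one_apply, ← Complex.inv_eq_conj (hω' j),
        mul_inv_eq_one₀ (norm_ne_zero_iff.1 (by rw [hω' j]; exact one_ne_zero))] at hj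

end Characters

section Bessel

variable {d : ℕ} {f : (Fin d → ℤ) → ℂ} {M : ℝ}

theorem sum_normSq_le_of_hasMean (hf : ∀ k, ‖f k‖ ≤ M) {s : Finset (Fin d → ℂ)}
    (hs : ∀ ω ∈ s, OnTorus ω) {c : (Fin d → ℂ) → ℂ}
    (hc : ∀ ω ∈ s, HasMean (fun k => f k * conj (eOmega ω k)) (c ω)) :
    ∑ ω ∈ s, Complex.normSq (c ω) ≤ M ^ 2 := by
  set S : (Fin d → ℤ) → ℂ := fun k => ∑ ω ∈ s, c ω * eOmega ω k
  have hfS : HasMean (fun k => f k * conj (S k)) (∑ ω ∈ s, Complex.normSq (c ω) : ℝ) := by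
    have hmean := hasMean_sum fun ω hω => (hc ω hω).const_mul (conj (c ω))
    convert hmean using 1
    · ext k
      simp only [S, map_sum, map_mul, mul_sum]
      exact sum_congr rfl fun ω _ => by ring
    · push_cast
      exact sum_congr rfl fun ω _ => by rw [mul_comm, Complex.mul_conj]
  have hSS : HasMean (fun k => S k * conj (S k)) (∑ ω ∈ s, Complex.normSq (c ω) : ℝ) := by
    have hmean := hasMean_sum fun ω hω => hasMean_sum fun ω' hω' =>
      (hasMean_eOmega_mul_conj (hs ω hω) (hs ω' hω')).const_mul (c ω * conj (c ω'))
    convert hmean using 1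
    · ext k
      simp only [S, map_sum, map_mul, sum_mul_sum]
      exact sum_congr rfl fun ω _ => sum_congr rfl fun ω' _ => by ring
    · push_cast
      simp only [mul_ite, mul_one, mul_zero, sum_ite_eq, Complex.mul_conj]
      exact sum_congr rfl fun ω hω => by rw [if_pos hω]
  -- Its mean is `∑ |c_ω|²`, while pointwise it equals `|f|² - |f - S|² ≤ M²`.
  have hdiff := (hfS.add hfS.conj).sub hSS
  have hle : ∀ k, (f k * conj (S k) + conj (f k * conj (S k)) - S k * conj (S k)).re ≤ M ^ 2 := by
    intro k
    have hsq : f k * conj (S k) + conj (f k * conj (S k)) - S k * conj (S k)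
        = (Complex.normSq (f k) : ℂ) - Complex.normSq (f k - S k) := by
      rw [← Complex.mul_conj, ← Complex.mul_conj, map_sub, map_mul, Complex.conj_conj]
      ring
    rw [hsq, Complex.sub_re, Complex.ofReal_re, Complex.ofReal_re, Complex.normSq_eq_norm_sq]
    nlinarith [Complex.normSq_nonneg (f k - S k), norm_nonneg (f k), hf k]
  simpa using hdiff.re_le hle

/-- The coefficient `[f, e_ω]`; a junk value unless the mean exists. -/
def bohrCoeff (f : (Fin d → ℤ) → ℂ) (ω : Fin d → ℂ) : ℂ :=
  limUnder atTop (boxAvg fun k => f k * conj (eOmega ω k))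

theorem summable_indicator_normSq_bohrCoeff (hf : ∀ k, ‖f k‖ ≤ M) :
    Summable ({ω | OnTorus ω ∧ ∃ c, HasMean (fun k => f k * conj (eOmega ω k)) c}.indicator
      fun ω => Complex.normSq (bohrCoeff f ω)) := by
  refine summable_of_sum_le (c := M ^ 2)
    (fun ω => Set.indicator_nonneg (fun ω _ => Complex.normSq_nonneg _) ω) fun u => ?_
  classical
  rw [sum_indicator_eq_sum_filter]
  exact sum_normSq_le_of_hasMean hf (fun ω hω => (mem_filter.1 hω).2.1)
    fun ω hω => tendsto_nhds_limUnder (mem_filter.1 hω).2.2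

theorem countable_setOf_hasMean_ne_zero (hf : ∀ k, ‖f k‖ ≤ M) :
    {ω | OnTorus ω ∧ ∃ c ≠ 0, HasMean (fun k => f k * conj (eOmega ω k)) c}.Countable := by
  refine (summable_indicator_normSq_bohrCoeff hf).countable_support.mono ?_
  rintro ω ⟨hω, c, hc0, hc⟩
  refine Set.indicator_apply_ne_zero.2 ⟨⟨hω, c, hc⟩, ?_⟩
  rw [Function.mem_support, bohrCoeff, hc.limUnder_eq]
  exact (Complex.normSq_pos.2 hc0).ne'

end Bessel

/-- The Bohr spectrum `Λ(h) = {ω ∈ 𝕋^d : [h, e_ω] ≠ 0}` of an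
almost periodic `h : ℤ^d → ℂ^r` is countable. -/
theorem bohrSpectrum_countable {d r : ℕ}
    (h : (Fin d → ℤ) → Fin r → ℂ) (hap : IsBohrAP h) :
    Set.Countable {ω : Fin d → ℂ | OnTorus ω ∧
      ∃ L : Fin r → ℂ, L ≠ 0 ∧ HasMeanPairing h (eOmega ω) L} := by
  obtain ⟨⟨M, hM⟩, -⟩ := hap
  refine (Set.countable_iUnion fun i =>
    countable_setOf_hasMean_ne_zero (f := fun k => h k i) fun k => hM k i).mono ?_
  rintro ω ⟨hω, L, hL, hLh⟩
  obtain ⟨i, hi⟩ := Function.ne_iff.1 hL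
  exact Set.mem_iUnion.2 ⟨i, hω, L i, hi, hLh i⟩
end
end

section
/- Let C be a crystal framework in ℝ^d, let F ⊂ 𝕋^d be finite, and for each ω ∈ F let a_ω : V₀ → ℂ^d be nonzero. If the trigonometric velocity field g = Σ_{ω ∈ F} a_ω ⊗ e_ω (i.e. g(v,k) = Σ_{ω ∈ F} ω^k a_ω(v)) is an infinitesimal flex of C, then each summand a_ω ⊗ e_ω is itself a (nonzero, ω-phase-periodic) infinitesimal flex of C. -/
open Filter

noncomputable section

/-- A crystal framework in `ℝ^d`: a finite motif of vertices `V` placed by `p`,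
a full-rank translation lattice generated by `a₁, …, a_d`, and a finite set of
motif edges `E` with endpoints `fst e = (v, l)` and `snd e = (w, m)` standing for
the joints `p(v, l)` and `p(w, m)`.  Joints are pairwise distinct and edge vectors
are nonzero. -/
structure CrystalFramework (d : ℕ) where
  V : Type
  fintypeV : Fintype V
  decV : DecidableEq V
  E : Type
  fintypeE : Fintype E
  p : V → Fin d → ℝ
  a : Fin d → Fin d → ℝ
  indep : LinearIndependent ℝ a
  fst : E → V × (Fin d → ℤ)
  snd : E → V × (Fin d → ℤ)
  joint_injective : Function.Injective
    (fun vk : V × (Fin d → ℤ) =>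
      (fun i => p vk.1 i + ∑ j, (vk.2 j : ℝ) * a j i : Fin d → ℝ))
  edge_nonzero : ∀ e : E,
    (fun i => p (fst e).1 i + ∑ j, ((fst e).2 j : ℝ) * a j i : Fin d → ℝ) ≠
    (fun i => p (snd e).1 i + ∑ j, ((snd e).2 j : ℝ) * a j i)

attribute [instance] CrystalFramework.fintypeV CrystalFramework.decV CrystalFramework.fintypeE

namespace CrystalFramework

variable {d : ℕ} (C : CrystalFramework d)

/-- The joint `p(v, k) = p(v) + k₁a₁ + ⋯ + k_d a_d`. -/
def joint (v : C.V) (k : Fin d → ℤ) : Fin d → ℝ :=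
  fun i => C.p v i + ∑ j, (k j : ℝ) * C.a j i

/-- The edge vector `p(e) = p(v, l) - p(w, m)` for the motif edge `e = ((v,l),(w,m))`. -/
def edgeVec (e : C.E) : Fin d → ℝ :=
  fun i => C.joint (C.fst e).1 (C.fst e).2 i - C.joint (C.snd e).1 (C.snd e).2 i

/-- A complex velocity field `u` is an infinitesimal flex:
`p(e) ⋅ (u(v, l+k) - u(w, m+k)) = 0` for every motif edge and every `k ∈ ℤ^d`. -/
def IsFlex (u : C.V × (Fin d → ℤ) → Fin d → ℂ) : Prop :=
  ∀ (e : C.E) (k : Fin d → ℤ),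
    ∑ i, (C.edgeVec e i : ℂ) *
      (u ((C.fst e).1, fun j => (C.fst e).2 j + k j) i -
       u ((C.snd e).1, fun j => (C.snd e).2 j + k j) i) = 0

/-- A real velocity field `u` is an infinitesimal flex. -/
def IsRealFlex (u : C.V × (Fin d → ℤ) → Fin d → ℝ) : Prop :=
  ∀ (e : C.E) (k : Fin d → ℤ),
    ∑ i, C.edgeVec e i *
      (u ((C.fst e).1, fun j => (C.fst e).2 j + k j) i -
       u ((C.snd e).1, fun j => (C.snd e).2 j + k j) i) = 0

/-- A complex velocity field is trivial if the flex condition holds for every pair of joints. -/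
def IsTrivial (u : C.V × (Fin d → ℤ) → Fin d → ℂ) : Prop :=
  ∀ (v w : C.V) (k k' : Fin d → ℤ),
    ∑ i, ((C.joint v k i - C.joint w k' i : ℝ) : ℂ) * (u (v, k) i - u (w, k') i) = 0

/-- A real velocity field is trivial if the flex condition holds for every pair of joints. -/
def IsRealTrivial (u : C.V × (Fin d → ℤ) → Fin d → ℝ) : Prop :=
  ∀ (v w : C.V) (k k' : Fin d → ℤ),
    ∑ i, (C.joint v k i - C.joint w k' i) * (u (v, k) i - u (w, k') i) = 0

/-- A complex velocity field is strictly periodic if `u(v,k) = u(v,0)`. -/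
def StrictlyPeriodic (u : C.V × (Fin d → ℤ) → Fin d → ℂ) : Prop :=
  ∀ (v : C.V) (k : Fin d → ℤ), u (v, k) = u (v, 0)

/-- A real velocity field is strictly periodic if `u(v,k) = u(v,0)`. -/
def StrictlyPeriodicReal (u : C.V × (Fin d → ℤ) → Fin d → ℝ) : Prop :=
  ∀ (v : C.V) (k : Fin d → ℤ), u (v, k) = u (v, 0)

/-- The `ω`-phase-periodic velocity field `b ⊗ e_ω : (v,k) ↦ ω^k b(v)`. -/
def phaseField (ω : Fin d → ℂ) (b : C.V → Fin d → ℂ) :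
    C.V × (Fin d → ℤ) → Fin d → ℂ :=
  fun vk i => zpowVec ω vk.2 * b vk.1 i

/-- The symbol function `Φ_C(z)`: the row of the motif edge `e = ((v,l),(w,m))` has
entries `z̄^l p(e)` in the columns of `v` and `-z̄^m p(e)` in the columns of `w`
(in particular entries `(z̄^l - z̄^m) p(e)` in the columns of `v` when `v = w`). -/
def symbol (z : Fin d → ℂ) : Matrix C.E (C.V × Fin d) ℂ :=
  Matrix.of fun e xi =>
    (C.edgeVec e xi.2 : ℂ) *
      ((if xi.1 = (C.fst e).1 then
          zpowVec (fun j => (starRingEnd ℂ) (z j)) (C.fst e).2 else 0) -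
       (if xi.1 = (C.snd e).1 then
          zpowVec (fun j => (starRingEnd ℂ) (z j)) (C.snd e).2 else 0))

/-- The RUM spectrum `Ω(C)`: the set of `ω ∈ 𝕋^d` admitting a nonzero
`ω`-phase-periodic infinitesimal flex. -/
def RUM : Set (Fin d → ℂ) :=
  {ω | OnTorus ω ∧ ∃ b : C.V → Fin d → ℂ, b ≠ 0 ∧ C.IsFlex (C.phaseField ω b)}

end CrystalFramework

/-!
Translating the `k`-th copy of an edge multiplies the stretch of an `ω`-phase-periodic field by
`ω^k`. So the stretch of the trigonometric field on the `k`-th copy of a motif edge `e` is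
`∑_{ω ∈ F} c_ω ω^k`, where `c_ω` is the stretch of `a_ω ⊗ e_ω` on `e` itself. The maps `k ↦ ω^k`
are distinct characters of `ℤ^d`, hence linearly independent by Dedekind's lemma, so if this sum
vanishes for all `k` then every `c_ω = 0`, i.e. every summand is a flex.
-/

lemma zpowVec_add {d : ℕ} {z : Fin d → ℂ} (hz : ∀ j, z j ≠ 0) (k l : Fin d → ℤ) :
    zpowVec z (k + l) = zpowVec z k * zpowVec z l := by
  simp only [zpowVec, Pi.add_apply, ← Finset.prod_mul_distrib]
  exact Finset.prod_congr rfl fun j _ => zpow_add₀ (hz j) _ _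

lemma zpowVec_single {d : ℕ} (z : Fin d → ℂ) (j : Fin d) :
    zpowVec z (Pi.single j 1) = z j := by
  rw [zpowVec, Finset.prod_eq_single j (fun i _ hij => by simp [hij]) (by simp)]
  simp

def zpowVecHom {d : ℕ} (z : {z : Fin d → ℂ // ∀ j, z j ≠ 0}) :
    Multiplicative (Fin d → ℤ) →* ℂ where
  toFun k := zpowVec z (Multiplicative.toAdd k)
  map_one' := by simp [zpowVec]
  map_mul' k l := zpowVec_add z.2 _ _

lemma zpowVecHom_injective {d : ℕ} : Function.Injective (zpowVecHom (d := d)) := fun z w h =>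
  Subtype.ext <| funext fun j => by
    simpa [zpowVecHom, zpowVec_single] using
      DFunLike.congr_fun h (Multiplicative.ofAdd (Pi.single j 1))

lemma linearIndepOn_zpowVec {d : ℕ} :
    LinearIndepOn ℂ (fun z k => zpowVec z k) {z : Fin d → ℂ | ∀ j, z j ≠ 0} :=
  ((linearIndependent_monoidHom (Multiplicative (Fin d → ℤ)) ℂ).comp _ zpowVecHom_injective :)

lemma eq_zero_of_sum_mul_zpowVec_eq_zero {d : ℕ} {F : Finset (Fin d → ℂ)}
    (hF : ∀ ω ∈ F, ∀ j, ω j ≠ 0) {c : (Fin d → ℂ) → ℂ}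
    (h : ∀ k, ∑ ω ∈ F, c ω * zpowVec ω k = 0) : ∀ ω ∈ F, c ω = 0 :=
  linearIndepOn_iff'.1 linearIndepOn_zpowVec F c hF (funext fun k => by simpa using h k)

lemma OnTorus.ne_zero {d : ℕ} {z : Fin d → ℂ} (hz : OnTorus z) (j : Fin d) : z j ≠ 0 :=
  norm_ne_zero_iff.1 (by rw [hz j]; exact one_ne_zero)

namespace CrystalFramework

variable {d : ℕ} (C : CrystalFramework d)

/-- The first-order change `p(e) · (u(v, l+k) - u(w, m+k))` of half the squared length of the
`k`-th translate of the motif edge `e` under the velocity field `u`. -/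
def edgeStretch (u : C.V × (Fin d → ℤ) → Fin d → ℂ) (e : C.E) (k : Fin d → ℤ) : ℂ :=
  ∑ i, (C.edgeVec e i : ℂ) *
    (u ((C.fst e).1, fun j => (C.fst e).2 j + k j) i -
     u ((C.snd e).1, fun j => (C.snd e).2 j + k j) i)

lemma isFlex_iff_edgeStretch_eq_zero (u : C.V × (Fin d → ℤ) → Fin d → ℂ) :
    C.IsFlex u ↔ ∀ e k, C.edgeStretch u e k = 0 :=
  Iff.rfl

lemma edgeStretch_finset_sum {ι : Type*} (s : Finset ι)
    (u : ι → C.V × (Fin d → ℤ) → Fin d → ℂ) (e : C.E) (k : Fin d → ℤ) :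
    C.edgeStretch (fun vk i => ∑ x ∈ s, u x vk i) e k = ∑ x ∈ s, C.edgeStretch (u x) e k := by
  simp only [edgeStretch, ← Finset.sum_sub_distrib, Finset.mul_sum]
  exact Finset.sum_comm

lemma edgeStretch_phaseField {ω : Fin d → ℂ} (hω : ∀ j, ω j ≠ 0) (b : C.V → Fin d → ℂ)
    (e : C.E) (k : Fin d → ℤ) :
    C.edgeStretch (C.phaseField ω b) e k = zpowVec ω k * C.edgeStretch (C.phaseField ω b) e 0 := by
  have hshift (l : Fin d → ℤ) : zpowVec ω (fun j => l j + k j) = zpowVec ω l * zpowVec ω k :=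
    zpowVec_add hω l k
  simp only [edgeStretch, phaseField, hshift, Pi.zero_apply, add_zero, Finset.mul_sum]
  exact Finset.sum_congr rfl fun i _ => by ring

end CrystalFramework

theorem summand_isFlex_of_trigonometric_isFlex_general {d : ℕ} (C : CrystalFramework d)
    (F : Finset (Fin d → ℂ)) (hF : ∀ ω ∈ F, OnTorus ω)
    (a : (Fin d → ℂ) → C.V → Fin d → ℂ)
    (hflex : C.IsFlex (fun vk i => ∑ ω ∈ F, zpowVec ω vk.2 * a ω vk.1 i)) :
    ∀ ω ∈ F, C.IsFlex (C.phaseField ω (a ω)) := by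
  have hF₀ : ∀ ω ∈ F, ∀ j, ω j ≠ 0 := fun ω hω => (hF ω hω).ne_zero
  intro ω hω
  rw [C.isFlex_iff_edgeStretch_eq_zero] at hflex ⊢
  intro e
  have hsum (k : Fin d → ℤ) :
      ∑ ω ∈ F, C.edgeStretch (C.phaseField ω (a ω)) e 0 * zpowVec ω k = 0 :=
    calc ∑ ω ∈ F, C.edgeStretch (C.phaseField ω (a ω)) e 0 * zpowVec ω k
        = ∑ ω ∈ F, C.edgeStretch (C.phaseField ω (a ω)) e k :=
          Finset.sum_congr rfl fun ω hω =>
            (mul_comm _ _).trans (C.edgeStretch_phaseField (hF₀ ω hω) _ e k).symm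
      _ = C.edgeStretch (fun vk i => ∑ ω ∈ F, C.phaseField ω (a ω) vk i) e k :=
          (C.edgeStretch_finset_sum F _ e k).symm
      _ = 0 := hflex e k
  intro k
  rw [C.edgeStretch_phaseField (hF₀ ω hω), eq_zero_of_sum_mul_zpowVec_eq_zero hF₀ hsum ω hω,
    mul_zero]

/-- If a trigonometric velocity field `g = ∑_{ω ∈ F} a_ω ⊗ e_ω` with
nonzero coefficients is an infinitesimal flex of `C`, then each summand `a_ω ⊗ e_ω`
is itself a (nonzero, `ω`-phase-periodic) infinitesimal flex of `C`. -/
theorem summand_isFlex_of_trigonometric_isFlex {d : ℕ} (C : CrystalFramework d)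
    (F : Finset (Fin d → ℂ)) (hF : ∀ ω ∈ F, OnTorus ω)
    (a : (Fin d → ℂ) → C.V → Fin d → ℂ) (ha : ∀ ω ∈ F, a ω ≠ 0)
    (hflex : C.IsFlex (fun vk i => ∑ ω ∈ F, zpowVec ω vk.2 * a ω vk.1 i)) :
    ∀ ω ∈ F, C.IsFlex (C.phaseField ω (a ω)) :=
  summand_isFlex_of_trigonometric_isFlex_general C F hF a hflex
end
end
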